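/- arXiv:1907.00284 — 3 statements merged into one kernel-verified Lean document; each statement's English description precedes it below -/
import Mathlib

section
/- Suppose κ is a cardinal, G is a function assigning a graph to each ordinal, j : V → M is an elementary embedding with critical point κ into a transitive class M, and j(G)(κ+1) = G(κ+1). If for all ordinals α ≤ α' there is a graph homomorphism G(α') → G(α), then there is a graph homomorphism from G(κ) to G(κ+1), namely the composition of a homomorphism h : j(G)(j(κ)) → G(κ+1) existing in M with the restriction j↾G(κ) : G(κ) → j(G)(j(κ)). -/
/-!
Let `R` code `G` on the ordinals `≤ κ + 1`. In `V`, the graph `G(κ)` maps homomorphically to every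
graph of `R` whose index does not exceed `κ`; once homomorphisms are coded as relations, this is a
first-order property of `R`, `κ` and `G(κ)`. By elementarity, in `M` the graph `j(G)(j κ)` maps to
every graph of `j R` whose index is at most `j κ`, among them `G(κ + 1)`, because
`⟨κ + 1, G(κ + 1)⟩ ∈ j R` and `κ + 1 ≤ j κ`. A homomorphism found in the transitive class `M` is
one in `V`, and composing it with `j ↾ G(κ)` gives the claim.
-/

open FirstOrder

namespace WVP

/-- The type of relation symbols of the language of set theory: a single binary
relation (membership). -/
inductive memRel : ℕ → Type
  | mem : memRel 2

/-- The first-order language with a single binary relation symbol `∈`. -/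
def ZFLang : FirstOrder.Language := ⟨fun _ => Empty, memRel⟩

instance : ZFLang.Structure ZFSet where
  funMap := fun f _ => f.elim
  RelMap := fun r x => match r with | .mem => x 0 ∈ x 1

instance (M : Set ZFSet) : ZFLang.Structure M where
  funMap := fun f _ => f.elim
  RelMap := fun r x => match r with | .mem => (x 0 : ZFSet) ∈ (x 1 : ZFSet)

/-- `M` is a transitive class of ZF-sets. -/
def ClassTransitive (M : Set ZFSet) : Prop := ∀ x ∈ M, ∀ y ∈ x, y ∈ M

/-- `j : V → M` is an elementary embedding of the set-theoretic universe into the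
class `M` (elementary with respect to the language of set theory). -/
def Elementary (M : Set ZFSet) (j : ZFSet → ZFSet) : Prop :=
  ∃ hj : ∀ x, j x ∈ M, ∀ (n : ℕ) (φ : ZFLang.Formula (Fin n)) (v : Fin n → ZFSet),
    φ.Realize v ↔ φ.Realize fun i => (⟨j (v i), hj (v i)⟩ : M)

attribute [local instance] Classical.propDecidable

noncomputable instance (n : ℕ) (F : (Fin n → ZFSet) → ZFSet) : ZFSet.Definable n F :=
  Classical.allZFSetDefinable F

/-- `x` is a (von Neumann) ordinal: a transitive set all of whose elements are
transitive. -/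
def IsOrd (x : ZFSet) : Prop := x.IsTransitive ∧ ∀ y ∈ x, ZFSet.IsTransitive y

/-- Ordinal successor `κ + 1 = κ ∪ {κ}`. -/
def succZ (x : ZFSet) : ZFSet := insert x x

/-- The cumulative hierarchy: `Vlev β = ⋃_{α ∈ β} 𝒫(Vlev α)`, so that for an
ordinal `β`, `Vlev β` is the set `V_β` of all sets of rank less than `β`. -/
noncomputable def Vlev : ZFSet → ZFSet :=
  ZFSet.mem_wf.fix fun β IH =>
    ZFSet.sUnion (ZFSet.image
      (fun α => if h : α ∈ β then ZFSet.powerset (IH α h) else ∅) β)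

/-- `κ` is `β`-`C`-strong: there are a transitive class `M` and an elementary
embedding `j : V → M` with critical point `κ` such that `V_β ⊆ M` and
`j(C ∩ V_β) ∩ V_β = C ∩ V_β`. -/
def BetaCStrong (κ β C : ZFSet) : Prop :=
  ∃ (M : Set ZFSet) (j : ZFSet → ZFSet), ClassTransitive M ∧ Elementary M j ∧
    IsOrd κ ∧ j κ ≠ κ ∧ (∀ α, IsOrd α → α ∈ κ → j α = α) ∧
    (∀ x, x ∈ Vlev β → x ∈ M) ∧
    j (C ∩ Vlev β) ∩ Vlev β = C ∩ Vlev β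

/-- There is a graph homomorphism from the graph `(g, e)` to the graph `(g', e')`. -/
def GraphHom (g e g' e' : ZFSet) : Prop :=
  ∃ f : ZFSet → ZFSet, (∀ x ∈ g, f x ∈ g') ∧
    ∀ x y : ZFSet, ZFSet.pair x y ∈ e → ZFSet.pair (f x) (f y) ∈ e'

/-- `(g, e)` is a graph: `e` is a set of (Kuratowski-coded) pairs from `g`. -/
def IsGraph (g e : ZFSet) : Prop := ∀ z ∈ e, ∃ x ∈ g, ∃ y ∈ g, z = ZFSet.pair x y

/-- `g` has cardinality less than `δ`: `g` injects into some element of `δ`. -/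
def SmallerThan (g δ : ZFSet) : Prop :=
  ∃ γ ∈ δ, ∃ f : ZFSet → ZFSet,
    (∀ x ∈ g, f x ∈ γ) ∧ ∀ x ∈ g, ∀ y ∈ g, f x = f y → x = y

/-- `κ` is a cardinal: an ordinal not surjected onto by any smaller ordinal. -/
def IsCard (κ : ZFSet) : Prop :=
  IsOrd κ ∧ ∀ γ ∈ κ, ¬ ∃ f : ZFSet → ZFSet,
    (∀ x ∈ γ, f x ∈ κ) ∧ ∀ y ∈ κ, ∃ x ∈ γ, f x = y

/-- The restriction `G ∩ V_β`-style set coding of the class function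
`α ↦ ⟨α, (gV α, gE α)⟩` to the ordinals in `β`. -/
noncomputable def Gres (gV gE : ZFSet → ZFSet) (β : ZFSet) : ZFSet :=
  ZFSet.image (fun α => ZFSet.pair α (ZFSet.pair (gV α) (gE α))) β

theorem isOrd_iff_isOrdinal {x : ZFSet} : IsOrd x ↔ x.IsOrdinal :=
  ZFSet.isOrdinal_iff_forall_mem_isTransitive.symm

theorem isOrd_of_mem {x y : ZFSet} (hx : IsOrd x) (hy : y ∈ x) : IsOrd y :=
  isOrd_iff_isOrdinal.2 ((isOrd_iff_isOrdinal.1 hx).mem hy)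

theorem isOrd_succZ {x : ZFSet} (hx : IsOrd x) : IsOrd (succZ x) :=
  isOrd_iff_isOrdinal.2 (ZFSet.isOrdinal_succ (isOrd_iff_isOrdinal.1 hx))

theorem mem_succZ {x y : ZFSet} : y ∈ succZ x ↔ y = x ∨ y ∈ x := ZFSet.mem_insert_iff

theorem graphHom_of_rel {g e g' e' : ZFSet} (R : ZFSet) (hg : IsGraph g e)
    (hvert : ∀ x ∈ g, ∃ y ∈ g', ZFSet.pair x y ∈ R)
    (hedge : ∀ x y u w, ZFSet.pair x u ∈ R → ZFSet.pair y w ∈ R →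
      ZFSet.pair x y ∈ e → ZFSet.pair u w ∈ e') :
    GraphHom g e g' e' := by
  have hsel : ∀ x, ∃ y, x ∈ g → y ∈ g' ∧ ZFSet.pair x y ∈ R := fun x =>
    if hx : x ∈ g then (hvert x hx).imp fun _ hy _ => hy else ⟨∅, fun h => absurd h hx⟩
  choose f hf using hsel
  refine ⟨f, fun x hx => (hf x hx).1, fun x y hxy => ?_⟩
  obtain ⟨x', hx', y', hy', hpair⟩ := hg _ hxy
  obtain ⟨rfl, rfl⟩ := ZFSet.pair_injective hpair
  exact hedge x y _ _ (hf x hx').2 (hf y hy').2 hxy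

section Formulas

open FirstOrder.Language

variable {α : Type}

def memF (a b : α) : ZFLang.Formula α :=
  Relations.formula₂ (memRel.mem : ZFLang.Relations 2) (var a) (var b)

def eqF (a b : α) : ZFLang.Formula α := Term.equal (var a) (var b)

/-- Quantifiers bind the variable `none`; the variables of the body are lifted by `some`. -/
def exF (φ : ZFLang.Formula (Option α)) : ZFLang.Formula α :=
  BoundedFormula.ex
    (BoundedFormula.relabel (n := 1) (k := 0) (fun o : Option α => o.elim (Sum.inr 0) Sum.inl) φ)

def allF (φ : ZFLang.Formula (Option α)) : ZFLang.Formula α :=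
  BoundedFormula.all
    (BoundedFormula.relabel (n := 1) (k := 0) (fun o : Option α => o.elim (Sum.inr 0) Sum.inl) φ)

def upairF (p a b : α) : ZFLang.Formula α :=
  allF ((memF none p).iff (eqF none a ⊔ eqF none b))

def pairF (p a b : α) : ZFLang.Formula α :=
  exF <| exF <| upairF p (some none) none ⊓ upairF (some none) a a ⊓ upairF none a b

def pairMemF (x y E : α) : ZFLang.Formula α :=
  exF (memF none E ⊓ pairF none x y)

def graphF (gv ge : α) : ZFLang.Formula α :=
  allF <| memF none ge ⟹
    exF (exF (memF (some none) gv ⊓ memF none gv ⊓ pairF (some (some none)) (some none) none))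

def homVertF (F gv gv' : α) : ZFLang.Formula α :=
  allF <| memF none gv ⟹ exF (memF none gv' ⊓ pairMemF (some none) none F)

def homEdgeF (F ge ge' : α) : ZFLang.Formula α :=
  allF <| allF <| allF <| allF <|
    let x : Option (Option (Option (Option α))) := some (some (some none))
    let y : Option (Option (Option (Option α))) := some (some none)
    let u : Option (Option (Option (Option α))) := some none
    pairMemF x u F ⟹ pairMemF y none F ⟹ pairMemF x y ge ⟹ pairMemF u none ge'

def graphHomF (gv ge gv' ge' : α) : ZFLang.Formula α :=
  exF (homVertF none gv gv' ⊓ homEdgeF none ge ge')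

def homToPairF (gv ge w : α) : ZFLang.Formula α :=
  allF <| allF <| pairF w (some none) none ⟹ graphHomF gv ge (some none) none

def homsDownF (R a gv ge : α) : ZFLang.Formula α :=
  allF <| memF none R ⟹ allF (allF (pairF (some (some none)) (some none) none ⟹
    ∼(memF a (some none)) ⟹ homToPairF gv ge none))

end Formulas

section Semantics

open FirstOrder.Language

variable {S : Type*} [ZFLang.Structure S]

def ZFMem (a b : S) : Prop :=
  Structure.RelMap (L := ZFLang) (memRel.mem : ZFLang.Relations 2) ![a, b]

def ZFUPair (p a b : S) : Prop := ∀ u, ZFMem u p ↔ u = a ∨ u = b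

def ZFPair (p a b : S) : Prop := ∃ c d, ZFUPair p c d ∧ ZFUPair c a a ∧ ZFUPair d a b

def ZFPairMem (x y E : S) : Prop := ∃ s, ZFMem s E ∧ ZFPair s x y

def ZFGraph (gv ge : S) : Prop :=
  ∀ z, ZFMem z ge → ∃ x y, ZFMem x gv ∧ ZFMem y gv ∧ ZFPair z x y

def ZFGraphHom (gv ge gv' ge' : S) : Prop :=
  ∃ F, (∀ x, ZFMem x gv → ∃ y, ZFMem y gv' ∧ ZFPairMem x y F) ∧
    ∀ x y u w, ZFPairMem x u F → ZFPairMem y w F → ZFPairMem x y ge → ZFPairMem u w ge'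

/-- For ordinals `a ∉ a'` means `a' ≤ a`; stated this way, its transfer to `M` needs no ordinal
theory there. -/
def ZFHomsDown (R a gv ge : S) : Prop :=
  ∀ q, ZFMem q R → ∀ a' w, ZFPair q a' w → ¬ ZFMem a a' →
    ∀ gv' ge', ZFPair w gv' ge' → ZFGraphHom gv ge gv' ge'

variable {α : Type} {v : α → S}

@[simp] theorem realize_memF {a b : α} : (memF a b).Realize v ↔ ZFMem (v a) (v b) :=
  Formula.realize_rel₂

@[simp] theorem realize_eqF {a b : α} : (eqF a b).Realize v ↔ v a = v b := by
  simp [eqF]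

@[simp] theorem realize_exF {φ : ZFLang.Formula (Option α)} :
    (exF φ).Realize v ↔ ∃ x, φ.Realize fun o => o.elim x v := by
  simp only [exF, Formula.Realize, BoundedFormula.realize_ex, BoundedFormula.realize_relabel]
  refine exists_congr fun x => iff_of_eq <|
    congrArg₂ (BoundedFormula.Realize φ) (funext fun o => ?_) (Subsingleton.elim _ _)
  cases o <;> rfl

@[simp] theorem realize_allF {φ : ZFLang.Formula (Option α)} :
    (allF φ).Realize v ↔ ∀ x, φ.Realize fun o => o.elim x v := by
  simp only [allF, Formula.Realize, BoundedFormula.realize_all, BoundedFormula.realize_relabel]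
  refine forall_congr' fun x => iff_of_eq <|
    congrArg₂ (BoundedFormula.Realize φ) (funext fun o => ?_) (Subsingleton.elim _ _)
  cases o <;> rfl

@[simp] theorem realize_upairF {p a b : α} :
    (upairF p a b).Realize v ↔ ZFUPair (v p) (v a) (v b) := by
  simp [upairF, ZFUPair]

@[simp] theorem realize_pairF {p a b : α} :
    (pairF p a b).Realize v ↔ ZFPair (v p) (v a) (v b) := by
  simp [pairF, ZFPair, and_assoc]

@[simp] theorem realize_pairMemF {x y E : α} :
    (pairMemF x y E).Realize v ↔ ZFPairMem (v x) (v y) (v E) := by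
  simp [pairMemF, ZFPairMem]

@[simp] theorem realize_graphF {gv ge : α} :
    (graphF gv ge).Realize v ↔ ZFGraph (v gv) (v ge) := by
  simp [graphF, ZFGraph, and_assoc]

@[simp] theorem realize_graphHomF {gv ge gv' ge' : α} :
    (graphHomF gv ge gv' ge').Realize v ↔ ZFGraphHom (v gv) (v ge) (v gv') (v ge') := by
  simp [graphHomF, homVertF, homEdgeF, ZFGraphHom]

@[simp] theorem realize_homsDownF {R a gv ge : α} :
    (homsDownF R a gv ge).Realize v ↔ ZFHomsDown (v R) (v a) (v gv) (v ge) := by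
  simp [homsDownF, homToPairF, ZFHomsDown]

end Semantics

@[simp] theorem zfMem_iff_mem {a b : ZFSet} : ZFMem a b ↔ a ∈ b := Iff.rfl

@[simp] theorem zfMem_coe_iff {M : Set ZFSet} {a b : M} : ZFMem a b ↔ (a : ZFSet) ∈ (b : ZFSet) :=
  Iff.rfl

theorem upair_self (x : ZFSet) : ({x, x} : ZFSet) = {x} := by
  ext
  simp

structure IsTransitiveEmbedding {S : Type*} [ZFLang.Structure S] (e : S → ZFSet) : Prop where
  injective : Function.Injective e
  zfMem_iff : ∀ a b, ZFMem a b ↔ e a ∈ e b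
  exists_eq_of_mem : ∀ a, ∀ y ∈ e a, ∃ b, e b = y

theorem isTransitiveEmbedding_id : IsTransitiveEmbedding (id : ZFSet → ZFSet) :=
  ⟨Function.injective_id, fun _ _ => Iff.rfl, fun _ y _ => ⟨y, rfl⟩⟩

theorem ClassTransitive.isTransitiveEmbedding {M : Set ZFSet} (hM : ClassTransitive M) :
    IsTransitiveEmbedding (Subtype.val : M → ZFSet) :=
  ⟨Subtype.val_injective, fun _ _ => Iff.rfl, fun a y hy => ⟨⟨y, hM a a.2 y hy⟩, rfl⟩⟩

namespace IsTransitiveEmbedding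

variable {S : Type*} [ZFLang.Structure S] {e : S → ZFSet} (he : IsTransitiveEmbedding e)
include he

theorem zfUPair_iff {p a b : S} : ZFUPair p a b ↔ e p = {e a, e b} := by
  constructor
  · intro h
    ext z
    rw [ZFSet.mem_pair]
    constructor
    · intro hz
      obtain ⟨u, rfl⟩ := he.exists_eq_of_mem p z hz
      rcases (h u).1 ((he.zfMem_iff u p).2 hz) with rfl | rfl
      exacts [Or.inl rfl, Or.inr rfl]
    · rintro (rfl | rfl)
      exacts [(he.zfMem_iff a p).1 ((h a).2 (Or.inl rfl)),
        (he.zfMem_iff b p).1 ((h b).2 (Or.inr rfl))]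
  · intro h u
    rw [he.zfMem_iff, h, ZFSet.mem_pair, he.injective.eq_iff, he.injective.eq_iff]

theorem zfPair_iff {p a b : S} : ZFPair p a b ↔ e p = ZFSet.pair (e a) (e b) := by
  simp only [ZFPair, he.zfUPair_iff, upair_self]
  constructor
  · rintro ⟨c, d, hp, hc, hd⟩
    rw [hp, hc, hd, ZFSet.pair]
  · intro hp
    obtain ⟨c, hc⟩ := he.exists_eq_of_mem p {e a} (by simp [hp, ZFSet.pair])
    obtain ⟨d, hd⟩ := he.exists_eq_of_mem p {e a, e b} (by simp [hp, ZFSet.pair])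
    exact ⟨c, d, by rw [hp, hc, hd, ZFSet.pair], hc, hd⟩

theorem zfPairMem_iff {x y E : S} : ZFPairMem x y E ↔ ZFSet.pair (e x) (e y) ∈ e E := by
  simp only [ZFPairMem, he.zfMem_iff, he.zfPair_iff]
  constructor
  · rintro ⟨s, hs, h⟩
    rwa [← h]
  · intro h
    obtain ⟨s, hs⟩ := he.exists_eq_of_mem E _ h
    exact ⟨s, hs ▸ h, hs⟩

theorem zfGraph_iff {gv ge : S} : ZFGraph gv ge ↔ IsGraph (e gv) (e ge) := by
  simp only [ZFGraph, IsGraph, he.zfMem_iff, he.zfPair_iff]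
  constructor
  · intro h z hz
    obtain ⟨z, rfl⟩ := he.exists_eq_of_mem ge z hz
    obtain ⟨x, y, hx, hy, hxy⟩ := h z hz
    exact ⟨e x, hx, e y, hy, hxy⟩
  · intro h z hz
    obtain ⟨x, hx, y, hy, hxy⟩ := h (e z) hz
    obtain ⟨x, rfl⟩ := he.exists_eq_of_mem gv x hx
    obtain ⟨y, rfl⟩ := he.exists_eq_of_mem gv y hy
    exact ⟨x, y, hx, hy, hxy⟩

theorem exists_eq_of_eq_pair {p : S} {x y : ZFSet} (h : e p = ZFSet.pair x y) :
    ∃ x' y', e x' = x ∧ e y' = y := by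
  obtain ⟨c, hc⟩ := he.exists_eq_of_mem p {x} (by simp [h, ZFSet.pair])
  obtain ⟨d, hd⟩ := he.exists_eq_of_mem p {x, y} (by simp [h, ZFSet.pair])
  obtain ⟨x', hx'⟩ := he.exists_eq_of_mem c x (by simp [hc])
  obtain ⟨y', hy'⟩ := he.exists_eq_of_mem d y (by simp [hd])
  exact ⟨x', y', hx', hy'⟩

theorem exists_eq_of_pair_mem {E : S} {x y : ZFSet} (h : ZFSet.pair x y ∈ e E) :
    ∃ x' y', e x' = x ∧ e y' = y :=
  let ⟨_, hp⟩ := he.exists_eq_of_mem E _ h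
  he.exists_eq_of_eq_pair hp

theorem graphHom_of_zfGraphHom {gv ge gv' ge' : S} (hg : IsGraph (e gv) (e ge))
    (h : ZFGraphHom gv ge gv' ge') : GraphHom (e gv) (e ge) (e gv') (e ge') := by
  obtain ⟨F, hvert, hedge⟩ := h
  refine graphHom_of_rel (e F) hg (fun x hx => ?_) (fun x y u w hxu hyw hxy => ?_)
  · obtain ⟨x, rfl⟩ := he.exists_eq_of_mem gv x hx
    obtain ⟨y, hy, hxy⟩ := hvert x ((he.zfMem_iff x gv).2 hx)
    exact ⟨e y, (he.zfMem_iff y gv').1 hy, he.zfPairMem_iff.1 hxy⟩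
  · obtain ⟨x, u, rfl, rfl⟩ := he.exists_eq_of_pair_mem hxu
    obtain ⟨y, w, rfl, rfl⟩ := he.exists_eq_of_pair_mem hyw
    exact he.zfPairMem_iff.1 <| hedge x y u w (he.zfPairMem_iff.2 hxu) (he.zfPairMem_iff.2 hyw)
      (he.zfPairMem_iff.2 hxy)

theorem graphHom_of_zfHomsDown {R a gv ge : S} {a' gv' ge' : ZFSet} (h : ZFHomsDown R a gv ge)
    (hg : IsGraph (e gv) (e ge)) (hq : ZFSet.pair a' (ZFSet.pair gv' ge') ∈ e R)
    (ha : e a ∉ a') : GraphHom (e gv) (e ge) gv' ge' := by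
  obtain ⟨q, hq'⟩ := he.exists_eq_of_mem R _ hq
  obtain ⟨a', w, rfl, hw⟩ := he.exists_eq_of_eq_pair hq'
  obtain ⟨gv', ge', rfl, rfl⟩ := he.exists_eq_of_eq_pair hw
  refine he.graphHom_of_zfGraphHom hg <| h q ((he.zfMem_iff q R).2 (hq' ▸ hq)) a' w
    (he.zfPair_iff.2 (hw ▸ hq')) (mt (he.zfMem_iff a a').1 ha) gv' ge' (he.zfPair_iff.2 hw)

end IsTransitiveEmbedding

theorem GraphHom.zfGraphHom {g e g' e' : ZFSet} (h : GraphHom g e g' e') :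
    ZFGraphHom g e g' e' := by
  obtain ⟨f, hvert, hedge⟩ := h
  have hF : ∀ x y, ZFPairMem x y (ZFSet.image (fun x => ZFSet.pair x (f x)) g) ↔
      x ∈ g ∧ f x = y := by
    intro x y
    rw [isTransitiveEmbedding_id.zfPairMem_iff]
    simp [ZFSet.pair_injective.eq_iff]
  refine ⟨ZFSet.image (fun x => ZFSet.pair x (f x)) g, fun x hx => ⟨f x, hvert x hx, ?_⟩,
    fun x y u w hxu hyw hxy => ?_⟩
  · exact (hF x (f x)).2 ⟨hx, rfl⟩
  · obtain ⟨-, rfl⟩ := (hF x u).1 hxu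
    obtain ⟨-, rfl⟩ := (hF y w).1 hyw
    rw [isTransitiveEmbedding_id.zfPairMem_iff] at hxy ⊢
    exact hedge x y hxy

theorem zfHomsDown_gres {gV gE : ZFSet → ZFSet} {β a : ZFSet} (hβ : IsOrd β) (ha : IsOrd a)
    (hBack : ∀ α α', IsOrd α → IsOrd α' → (α ∈ α' ∨ α = α') →
      GraphHom (gV α') (gE α') (gV α) (gE α)) :
    ZFHomsDown (Gres gV gE β) a (gV a) (gE a) := by
  intro q hq a' w hqw haa' gv' ge' hw
  rw [isTransitiveEmbedding_id.zfPair_iff] at hqw hw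
  obtain ⟨b, hb, rfl⟩ := ZFSet.mem_image.1 hq
  obtain ⟨rfl, rfl⟩ := ZFSet.pair_injective hqw
  obtain ⟨rfl, rfl⟩ := ZFSet.pair_injective hw
  have hb' : IsOrd b := isOrd_of_mem hβ hb
  refine (hBack b a hb' ha ?_).zfGraphHom
  rcases (isOrd_iff_isOrdinal.1 hb').mem_trichotomous (isOrd_iff_isOrdinal.1 ha) with h | h | h
  exacts [Or.inl h, Or.inr h, absurd h haa']

namespace Elementary

variable {M : Set ZFSet} {j : ZFSet → ZFSet} (hj : Elementary M j)
include hj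

theorem mem (x : ZFSet) : j x ∈ M := hj.1 x

theorem realize_iff {n : ℕ} (φ : ZFLang.Formula (Fin n)) (v : Fin n → ZFSet) :
    φ.Realize v ↔ φ.Realize fun i => (⟨j (v i), hj.mem (v i)⟩ : M) :=
  hj.2 n φ v

theorem mem_iff {x y : ZFSet} : x ∈ y ↔ j x ∈ j y := by
  simpa using hj.realize_iff (memF 0 1) ![x, y]

theorem pair_eq (hM : ClassTransitive M) (a b : ZFSet) :
    j (ZFSet.pair a b) = ZFSet.pair (j a) (j b) := by
  have h := (hj.realize_iff (pairF 0 1 2) ![ZFSet.pair a b, a, b]).1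
    (by simp [isTransitiveEmbedding_id.zfPair_iff])
  simpa [hM.isTransitiveEmbedding.zfPair_iff] using h

theorem isGraph (hM : ClassTransitive M) {g e : ZFSet} (h : IsGraph g e) :
    IsGraph (j g) (j e) := by
  have h := (hj.realize_iff (graphF 0 1) ![g, e]).1
    (by simpa [isTransitiveEmbedding_id.zfGraph_iff] using h)
  simpa [hM.isTransitiveEmbedding.zfGraph_iff] using h

theorem zfHomsDown {R a gv ge : ZFSet} (h : ZFHomsDown R a gv ge) :
    ZFHomsDown (⟨j R, hj.mem R⟩ : M) ⟨j a, hj.mem a⟩ ⟨j gv, hj.mem gv⟩ ⟨j ge, hj.mem ge⟩ := by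
  simpa using (hj.realize_iff (homsDownF 0 1 2 3) ![R, a, gv, ge]).1 (by simpa using h)

theorem apply_notMem {κ : ZFSet} (hκ : IsOrd κ) (hfix : ∀ α, IsOrd α → α ∈ κ → j α = α) :
    j κ ∉ κ := by
  intro h
  have hfixed : j (j κ) = j κ := hfix _ (isOrd_of_mem hκ h) h
  exact ZFSet.mem_irrefl _ (hfixed ▸ hj.mem_iff.1 h)

end Elementary

/-- Suppose `κ` is a cardinal, `G = (gV, gE)` assigns a graph to each ordinal,
`j : V → M` is an elementary embedding into a transitive class with critical point
`κ`, and `j(G)(κ+1) = G(κ+1)` (i.e. the pair `⟨κ+1, G(κ+1)⟩` belongs to `j` of every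
set-sized restriction of `G` to ordinals `β ∋ κ+1`). If for all ordinals `α ≤ α'`
there is a graph homomorphism `G(α') → G(α)`, then there is a graph homomorphism
`G(κ) → G(κ+1)`, namely the composition of a homomorphism
`h : j(G)(j(κ)) = (j (gV κ), j (gE κ)) → G(κ+1)` with `j ↾ G(κ)`. -/
theorem hom_from_embedding (κ : ZFSet) (hκ : IsCard κ)
    (M : Set ZFSet) (hM : ClassTransitive M) (j : ZFSet → ZFSet) (hj : Elementary M j)
    (hcrit₁ : j κ ≠ κ) (hcrit₂ : ∀ α, IsOrd α → α ∈ κ → j α = α)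
    (gV gE : ZFSet → ZFSet)
    (hGraph : ∀ α, IsOrd α → IsGraph (gV α) (gE α))
    (hCoh : ∀ β, IsOrd β → succZ κ ∈ β →
      ZFSet.pair (succZ κ) (ZFSet.pair (gV (succZ κ)) (gE (succZ κ))) ∈ j (Gres gV gE β))
    (hBack : ∀ α α', IsOrd α → IsOrd α' → (α ∈ α' ∨ α = α') →
      GraphHom (gV α') (gE α') (gV α) (gE α)) :
    ∃ f : ZFSet → ZFSet,
      ((∀ x ∈ j (gV κ), f x ∈ gV (succZ κ)) ∧
        ∀ x y : ZFSet, ZFSet.pair x y ∈ j (gE κ) →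
          ZFSet.pair (f x) (f y) ∈ gE (succZ κ)) ∧
      (∀ x ∈ gV κ, f (j x) ∈ gV (succZ κ)) ∧
      ∀ x y : ZFSet, ZFSet.pair x y ∈ gE κ →
        ZFSet.pair (f (j x)) (f (j y)) ∈ gE (succZ κ) := by
  have hκo : IsOrd κ := hκ.1
  have hβ : IsOrd (succZ (succZ κ)) := isOrd_succZ (isOrd_succZ hκo)
  have hjκ : j κ ∉ succZ κ := by
    rw [mem_succZ]
    rintro (h | h)
    exacts [hcrit₁ h, hj.apply_notMem hκo hcrit₂ h]
  obtain ⟨f, hfV, hfE⟩ : GraphHom (j (gV κ)) (j (gE κ)) (gV (succZ κ)) (gE (succZ κ)) :=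
    hM.isTransitiveEmbedding.graphHom_of_zfHomsDown
      (hj.zfHomsDown (zfHomsDown_gres hβ hκo hBack)) (hj.isGraph hM (hGraph κ hκo))
      (hCoh _ hβ (mem_succZ.2 (Or.inl rfl))) hjκ
  refine ⟨f, ⟨hfV, hfE⟩, fun x hx => hfV _ (hj.mem_iff.1 hx), fun x y hxy => hfE _ _ ?_⟩
  rw [← hj.pair_eq hM]
  exact hj.mem_iff.1 hxy

end WVP
end

section
/- The membership relation ∈* on the term model M* is set-like: for every (k₂,b₂,f₂) ∈ M*, the collection of =*-equivalence classes [k₁,b₁,f₁] with (k₁,b₁,f₁) ∈* (k₂,b₂,f₂) forms a set. Specifically, every (k₁,b₁,f₁) ∈* (k₂,b₂,f₂) is =*-equivalent to (k₁,b₁,f̄₁) where f̄₁(a) = f₁(a) if f₁(a) ∈ ⋃ran(f₂) and f̄₁(a) = ∅ otherwise. -/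
namespace WVP

attribute [local instance] Classical.propDecidable

/-- `tup X k`: the set of `k`-tuples (as lists) of elements of the ZF-set `X`. -/
def tup (X : ZFSet) (k : ℕ) : Set (List ZFSet) := {l | l.length = k ∧ ∀ z ∈ l, z ∈ X}

/-- `finTup X`: the set of all finite tuples from `X`, i.e. `X^{<ω}`. -/
def finTup (X : ZFSet) : Set (List ZFSet) := {l | ∀ z ∈ l, z ∈ X}

/-- `WFset A`: `A` is well-founded under the reverse of the proper-initial-segment
relation, i.e. there is no infinite chain `a₁ ⊊ a₂ ⊊ ⋯` of elements of `A`. -/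
def WFset (A : Set (List ZFSet)) : Prop :=
  ¬ ∃ g : ℕ → List ZFSet, (∀ n, g n ∈ A) ∧ ∀ n, g n <+: g (n + 1) ∧ g n ≠ g (n + 1)

/-- The coordinate projection `(x₁,…,x_k) ↦ (x_{i₁},…,x_{i_j})` (0-based indices). -/
def proj (is : List ℕ) (l : List ZFSet) : List ZFSet := is.map fun i => l.getD i ∅

/-- The inverse image operator `Proj⁻¹_{k,(i₁,…,i_j)}` of the coordinate projection
`proj is : X^k → X^j`, mapping subsets of `X^j` to subsets of `X^k`. -/
def ProjInv (X : ZFSet) (k : ℕ) (is : List ℕ) (A : Set (List ZFSet)) : Set (List ZFSet) :=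
  {l | l ∈ tup X k ∧ proj is l ∈ A}

/-- The bounded projection operator `BP_k` on subsets of `X^{k+1}`:
`BP_k(A) = {(x₁,…,x_{k+1}) ∈ X^{k+1} : ∃ z ∈ x_{k+1}, (x₁,…,x_k,z) ∈ A}`. -/
def BP (X : ZFSet) (k : ℕ) (A : Set (List ZFSet)) : Set (List ZFSet) :=
  {l | l ∈ tup X (k + 1) ∧ ∃ z, z ∈ l.getLastD ∅ ∧ l.dropLast ++ [z] ∈ A}

/-- A homomorphism of 𝒫-structures `𝒫_X → 𝒫_Y`: a Boolean algebra homomorphism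
`𝒫(X^{<ω}) → 𝒫(Y^{<ω})` sending `X^k` to `Y^k`, preserving the well-foundedness
predicate `WF` (forward direction), and commuting with the inverse-projection
operators `Proj⁻¹` and the bounded projection operators `BP_k`. -/
structure IsPHom (X Y : ZFSet) (h : Set (List ZFSet) → Set (List ZFSet)) : Prop where
  subset_finTup : ∀ A ⊆ finTup X, h A ⊆ finTup Y
  map_inter : ∀ A ⊆ finTup X, ∀ B ⊆ finTup X, h (A ∩ B) = h A ∩ h B
  map_compl : ∀ A ⊆ finTup X, h (finTup X \ A) = finTup Y \ h A
  map_const : ∀ k, h (tup X k) = tup Y k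
  map_wf : ∀ A ⊆ finTup X, WFset A → WFset (h A)
  map_projInv : ∀ (j k : ℕ) (is : List ℕ), is.length = j → (∀ i ∈ is, i < k) →
    ∀ A ⊆ tup X j, h (ProjInv X k is A) = ProjInv Y k is (h A)
  map_bp : ∀ (k : ℕ), ∀ A ⊆ tup X (k + 1), h (BP X k A) = BP Y k (h A)

/-- The term model `M*`: triples `(k, b, f)` with `b ∈ Y^k` and `f : X^k → V`
(represented as a total function on tuples, only its values on `X^k` matter). -/
structure MStar (X Y : ZFSet) where
  k : ℕ
  b : List ZFSet
  hb : b ∈ tup Y k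
  f : List ZFSet → ZFSet

/-- The membership relation `∈*` of the term model:
`(k₁,b₁,f₁) ∈* (k₂,b₂,f₂)` iff `b₁b₂ ∈ h({a₁a₂ : f₁(a₁) ∈ f₂(a₂)})`. -/
def memStar (X Y : ZFSet) (h : Set (List ZFSet) → Set (List ZFSet))
    (p q : MStar X Y) : Prop :=
  p.b ++ q.b ∈ h {l | ∃ a₁ ∈ tup X p.k, ∃ a₂ ∈ tup X q.k, l = a₁ ++ a₂ ∧ p.f a₁ ∈ q.f a₂}

/-- The equality relation `=*` of the term model:
`(k₁,b₁,f₁) =* (k₂,b₂,f₂)` iff `b₁b₂ ∈ h({a₁a₂ : f₁(a₁) = f₂(a₂)})`. -/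
def eqStar (X Y : ZFSet) (h : Set (List ZFSet) → Set (List ZFSet))
    (p q : MStar X Y) : Prop :=
  p.b ++ q.b ∈ h {l | ∃ a₁ ∈ tup X p.k, ∃ a₂ ∈ tup X q.k, l = a₁ ++ a₂ ∧ p.f a₁ = q.f a₂}

/-- "Łoś's theorem holds" for (the interpretations of) an `n`-ary formula, where `P`
is its interpretation in `V` and `Q` its interpretation in the term model `M*`:
for all `(k₁,b₁,f₁),…,(kₙ,bₙ,fₙ)` in `M*`,
`M* ⊨ φ[(k₁,b₁,f₁),…,(kₙ,bₙ,fₙ)]` iff `b₁⋯bₙ ∈ h({a₁⋯aₙ : V ⊨ φ[f₁(a₁),…,fₙ(aₙ)]})`. -/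
def LosHolds (X Y : ZFSet) (h : Set (List ZFSet) → Set (List ZFSet)) (n : ℕ)
    (P : (Fin n → ZFSet) → Prop) (Q : (Fin n → MStar X Y) → Prop) : Prop :=
  ∀ t : Fin n → MStar X Y,
    Q t ↔ (List.ofFn fun i => (t i).b).flatten ∈
      h {l | ∃ a : Fin n → List ZFSet, (∀ i, a i ∈ tup X (t i).k) ∧
        l = (List.ofFn a).flatten ∧ P fun i => (t i).f (a i)}


/-! Set `B = {a₁ : f₁(a₁) = f̄₁(a₁)}`. Every `a₁a₂` with `f₁(a₁) ∈ f₂(a₂)` projects, on its first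
`k₁` coordinates, into `B`; since `h` is monotone and commutes with `Proj⁻¹`, the hypothesis
`b₁b₂ ∈ h({a₁a₂ : f₁(a₁) ∈ f₂(a₂)})` gives `b₁ ∈ h(B)`. The diagonal `a ↦ aa` maps `B` into `{a₁ā₁ : f₁(a₁) = f̄₁(ā₁)}`, and the same
argument with the projection `Proj⁻¹_{k₁,(0,…,k₁-1,0,…,k₁-1)}` yields `b₁b₁` in its image. -/

lemma append_mem_tup {X : ZFSet} {a₁ a₂ : List ZFSet} {k₁ k₂ : ℕ} (h₁ : a₁ ∈ tup X k₁)
    (h₂ : a₂ ∈ tup X k₂) : a₁ ++ a₂ ∈ tup X (k₁ + k₂) :=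
  ⟨by simp [h₁.1, h₂.1], fun z hz => (List.mem_append.1 hz).elim (h₁.2 z) (h₂.2 z)⟩

lemma proj_range_eq_take {l : List ZFSet} {k : ℕ} (hk : k ≤ l.length) :
    proj (List.range k) l = l.take k := by
  apply List.ext_getElem
  · simp [proj, hk]
  · intro i hi _
    simp only [proj, List.length_map, List.length_range] at hi
    simp [proj, List.getElem?_eq_getElem (lt_of_lt_of_le hi hk)]

lemma proj_range_append_range {l : List ZFSet} {k : ℕ} (hl : l.length = k) :
    proj (List.range k ++ List.range k) l = l ++ l := by
  simp only [proj, List.map_append]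
  rw [← proj, proj_range_eq_take hl.ge, ← hl, List.take_length]

namespace IsPHom

variable {X Y : ZFSet} {h : Set (List ZFSet) → Set (List ZFSet)}

lemma map_mono (hh : IsPHom X Y h) {A B : Set (List ZFSet)} (hAB : A ⊆ B)
    (hB : B ⊆ finTup X) : h A ⊆ h B := by
  have hi := hh.map_inter A (hAB.trans hB) B hB
  rw [Set.inter_eq_self_of_subset_left hAB] at hi
  exact hi ▸ Set.inter_subset_right

lemma take_mem (hh : IsPHom X Y h) {j k : ℕ} {A B : Set (List ZFSet)} (hB : B ⊆ tup X j)
    (hA : ∀ l ∈ A, l ∈ tup X (j + k) ∧ l.take j ∈ B) {l : List ZFSet} (hl : l ∈ h A) :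
    l.take j ∈ h B := by
  have hAB : A ⊆ ProjInv X (j + k) (List.range j) B := fun l' hl' => by
    obtain ⟨hl'X, htake⟩ := hA l' hl'
    rw [← proj_range_eq_take (by simp [hl'X.1])] at htake
    exact ⟨hl'X, htake⟩
  have hproj := hh.map_projInv j (j + k) (List.range j) (by simp)
    (fun i hi => by simp at hi; omega) B hB
  obtain ⟨hlY, hlB⟩ : l ∈ ProjInv Y (j + k) (List.range j) (h B) :=
    hproj ▸ hh.map_mono hAB (fun _ hl' => hl'.1.2) hl
  rwa [proj_range_eq_take (by simp [hlY.1])] at hlB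

lemma append_self_mem (hh : IsPHom X Y h) {k : ℕ} {B E : Set (List ZFSet)}
    (hE : E ⊆ tup X (k + k)) (hB : ∀ a ∈ B, a ∈ tup X k ∧ a ++ a ∈ E) {b : List ZFSet}
    (hb : b ∈ h B) : b ++ b ∈ h E := by
  have hBE : B ⊆ ProjInv X k (List.range k ++ List.range k) E := fun a ha => by
    obtain ⟨haX, haa⟩ := hB a ha
    rw [← proj_range_append_range haX.1] at haa
    exact ⟨haX, haa⟩
  have hproj := hh.map_projInv (k + k) k (List.range k ++ List.range k) (by simp)
    (fun i hi => by simp at hi; omega) E hE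
  obtain ⟨hbY, hbE⟩ : b ∈ ProjInv Y k (List.range k ++ List.range k) (h E) :=
    hproj ▸ hh.map_mono hBE (fun _ ha => ha.1.2) hb
  rwa [proj_range_append_range hbY.1] at hbE

end IsPHom

lemma eqStar_of_memStar_of_eqOn {X Y : ZFSet} {h : Set (List ZFSet) → Set (List ZFSet)}
    (hh : IsPHom X Y h) {p q : MStar X Y} (hpq : memStar X Y h p q) (g : List ZFSet → ZFSet)
    (hg : ∀ a₁ ∈ tup X p.k, ∀ a₂ ∈ tup X q.k, p.f a₁ ∈ q.f a₂ → p.f a₁ = g a₁) :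
    eqStar X Y h p ⟨p.k, p.b, p.hb, g⟩ := by
  set B : Set (List ZFSet) := {a | a ∈ tup X p.k ∧ p.f a = g a}
  have hb : p.b ∈ h B := by
    have := hh.take_mem (j := p.k) (k := q.k) (B := B) (fun _ ha => ha.1) ?_ hpq
    · rwa [List.take_left' p.hb.1] at this
    rintro _ ⟨a₁, ha₁, a₂, ha₂, rfl, hmem⟩
    refine ⟨append_mem_tup ha₁ ha₂, ?_⟩
    rw [List.take_left' ha₁.1]
    exact And.intro ha₁ (hg a₁ ha₁ a₂ ha₂ hmem)
  dsimp only [eqStar]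
  refine hh.append_self_mem (k := p.k) ?_ ?_ hb
  · rintro _ ⟨a₁, ha₁, a₂, ha₂, rfl, -⟩
    exact append_mem_tup ha₁ ha₂
  · exact fun a ha => ⟨ha.1, a, ha.1, a, ha.1, rfl, ha.2⟩

/-- The membership relation `∈*` of the term model `M*` is set-like: every
`∈*`-predecessor `(k₁,b₁,f₁)` of `(k₂,b₂,f₂)` is `=*`-equivalent to `(k₁,b₁,f̄₁)`,
where `f̄₁(a) = f₁(a)` if `f₁(a) ∈ ⋃ran(f₂)` and `f̄₁(a) = ∅` otherwise; hence the
`∈*`-predecessors of `(k₂,b₂,f₂)` are represented, up to `=*`, by triples whose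
third components take values in the fixed set `⋃ran(f₂) ∪ {∅}`. -/
theorem memStar_setLike (X Y : ZFSet) (h : Set (List ZFSet) → Set (List ZFSet))
    (hh : IsPHom X Y h) (p q : MStar X Y) (hpq : memStar X Y h p q) :
    eqStar X Y h p
      ⟨p.k, p.b, p.hb, fun a =>
        if ∃ a₂ ∈ tup X q.k, p.f a ∈ q.f a₂ then p.f a else ∅⟩ ∧
    ∃ p' : MStar X Y, p'.k = p.k ∧ p'.b = p.b ∧
      (∀ a, p'.f a = ∅ ∨ ∃ a₂ ∈ tup X q.k, p'.f a ∈ q.f a₂) ∧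
      eqStar X Y h p p' := by
  set fbar : List ZFSet → ZFSet :=
    fun a => if ∃ a₂ ∈ tup X q.k, p.f a ∈ q.f a₂ then p.f a else ∅ with hfbar
  have heq := eqStar_of_memStar_of_eqOn hh hpq fbar
    fun _ _ a₂ ha₂ hmem => (if_pos ⟨a₂, ha₂, hmem⟩).symm
  refine ⟨heq, ⟨p.k, p.b, p.hb, fbar⟩, rfl, rfl, fun a => ?_, heq⟩
  by_cases hc : ∃ a₂ ∈ tup X q.k, p.f a ∈ q.f a₂
  · exact Or.inr (by simpa only [hfbar, if_pos hc] using hc)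
  · exact Or.inl (if_neg hc)

end WVP
end

section
/- Let h : 𝒫_X → 𝒫_Y be a homomorphism of 𝒫-structures and assume Łoś's theorem for the term model M*. Then the map j*(p) = (0, ⟨⟩, c_p), where c_p is the constant function on the empty tuple with value p, is an elementary embedding from (V, ∈, =) into (M*, ∈*, =*): for every formula φ(v₁,…,v_n) and all p₁,…,p_n ∈ V, V ⊨ φ[p₁,…,p_n] iff M* ⊨ φ[j*(p₁),…,j*(p_n)]. The proof uses h(∅) = ∅ and h(X⁰) = Y⁰ = {⟨⟩}. -/
namespace WVP

/-- The map `j* : V → M*`, `p ↦ (0, ⟨⟩, c_p)`, where `c_p` is the constant function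
with value `p`. -/
def jStar (X Y : ZFSet) (p : ZFSet) : MStar X Y :=
  ⟨0, [], ⟨rfl, by simp⟩, fun _ => p⟩

/-!
When every argument is of the form `j*(p) = (0, ⟨⟩, c_p)`, Łoś's theorem reduces
`M* ⊨ φ[j*(p₁),…,j*(pₙ)]` to `⟨⟩ ∈ h(S)`, where `S` is `X⁰` or `∅` according as `φ[p₁,…,pₙ]`
holds or not. Now `h(X⁰) = Y⁰ ∋ ⟨⟩`, while `h(∅) = h(X⁰ ∩ X¹) = Y⁰ ∩ Y¹ = ∅`.
-/

theorem tup_zero (X : ZFSet) : tup X 0 = {[]} := by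
  ext l
  simp +contextual [tup, List.length_eq_zero_iff]

theorem disjoint_tup {X : ZFSet} {k m : ℕ} (hkm : k ≠ m) : Disjoint (tup X k) (tup X m) :=
  Set.disjoint_left.2 fun _ hk hm => hkm (hk.1.symm.trans hm.1)

theorem tup_subset_finTup (X : ZFSet) (k : ℕ) : tup X k ⊆ finTup X := fun _ hl => hl.2

namespace IsPHom

variable {X Y : ZFSet} {h : Set (List ZFSet) → Set (List ZFSet)}

theorem map_empty (hh : IsPHom X Y h) : h ∅ = ∅ := by
  have hinter := hh.map_inter _ (tup_subset_finTup X 0) _ (tup_subset_finTup X 1)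
  rwa [(disjoint_tup zero_ne_one).inter_eq, hh.map_const, hh.map_const,
    (disjoint_tup zero_ne_one).inter_eq] at hinter

theorem nil_mem_map_iff (hh : IsPHom X Y h) (p : Prop) : [] ∈ h {l ∈ tup X 0 | p} ↔ p := by
  by_cases hp : p
  · rw [Set.sep_eq_self_iff_mem_true.2 fun _ _ => hp, hh.map_const, tup_zero]
    exact iff_of_true rfl hp
  · simp [hp, hh.map_empty]

end IsPHom

theorem losSet_jStar (X Y : ZFSet) {n : ℕ} (P : (Fin n → ZFSet) → Prop) (v : Fin n → ZFSet) :
    {l | ∃ a : Fin n → List ZFSet, (∀ i, a i ∈ tup X (jStar X Y (v i)).k) ∧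
        l = (List.ofFn a).flatten ∧ P fun i => (jStar X Y (v i)).f (a i)} =
      {l ∈ tup X 0 | P v} := by
  ext l
  simp only [jStar, tup_zero, Set.mem_singleton_iff, Set.mem_ofPred_eq]
  constructor
  · rintro ⟨a, ha, rfl, hP⟩
    simp [ha, hP]
  · rintro ⟨rfl, hP⟩
    exact ⟨fun _ => [], fun _ => rfl, by simp, hP⟩

/-- Let `h : 𝒫_X → 𝒫_Y` be a homomorphism of 𝒫-structures and assume Łoś's theorem
for (the interpretations `P` in `V` and `Q` in `M*` of) a formula `φ`. Then `j*` is
elementary with respect to `φ`: for all `p₁,…,pₙ ∈ V`,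
`V ⊨ φ[p₁,…,pₙ]` iff `M* ⊨ φ[j*(p₁),…,j*(pₙ)]`. -/
theorem jStar_elementary (X Y : ZFSet) (h : Set (List ZFSet) → Set (List ZFSet))
    (hh : IsPHom X Y h) (n : ℕ)
    (P : (Fin n → ZFSet) → Prop) (Q : (Fin n → MStar X Y) → Prop)
    (hLos : LosHolds X Y h n P Q) :
    ∀ v : Fin n → ZFSet, P v ↔ Q fun i => jStar X Y (v i) := by
  intro v
  have hnil : (List.ofFn fun i => (jStar X Y (v i)).b).flatten = [] := by simp [jStar]
  rw [hLos, hnil, losSet_jStar, hh.nil_mem_map_iff]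

end WVP
end
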